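/- arXiv:2207.01852 — 4 statements merged into one kernel-verified Lean document; each statement's English description precedes it below -/
import Mathlib

section
/- Let x_1,…,x_m be real numbers, X = diag(x_1,…,x_m) ∈ ℝ^{m×m}, and e = (1,…,1)^T ∈ ℝ^m. For each ℓ ≥ 0 let V_{(ℓ)} ∈ ℝ^{m×(n+1)} be the ℓ-th order derivative Vandermonde matrix, whose (j,k) entry (rows j = 1,…,m, columns k = 0,…,n) is the ℓ-th derivative of x^k evaluated at x_j, i.e. k(k−1)⋯(k−ℓ+1)·x_j^{k−ℓ} when ℓ ≤ k and 0 when ℓ > k (with V_{(0)} = V the ordinary Vandermonde matrix). Let A ∈ ℝ^{(ℓ+1)m×(ℓ+1)m} be the block lower-bidiagonal matrix with (ℓ+1)×(ℓ+1) blocks of size m×m, having X in every diagonal block, the block i·I (i times the m×m identity) in the subdiagonal block position (i+1, i) for i = 1,…,ℓ, and zero blocks elsewhere. Then for every k with 0 ≤ k ≤ n, the (k+1)-th column of the stacked matrix [V; V_{(1)}; V_{(2)}; …; V_{(ℓ)}] ∈ ℝ^{(ℓ+1)m×(n+1)} equals A^k applied to the vector (e; 0; …; 0) ∈ ℝ^{(ℓ+1)m}.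 -/
open Matrix

/-- The `ℓ`-th order derivative Vandermonde matrix: entry `(j,k)` is the `ℓ`-th
derivative of `x ^ k` evaluated at `x j`, i.e. `k(k-1)⋯(k-ℓ+1) * x j ^ (k-ℓ)`
when `ℓ ≤ k`, and `0` when `ℓ > k`. -/
def vandDeriv (m n ℓ : ℕ) (x : Fin m → ℝ) : Matrix (Fin m) (Fin (n + 1)) ℝ :=
  Matrix.of fun j k =>
    if ℓ ≤ (k : ℕ) then ((k : ℕ).descFactorial ℓ : ℝ) * x j ^ ((k : ℕ) - ℓ) else 0

/-- The block lower-bidiagonal matrix with `(ℓ+1) × (ℓ+1)` blocks of size `m × m`,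
with `X = diag (x 1, …, x m)` in every diagonal block and `i • I` in subdiagonal
block position `(i+1, i)` for `i = 1, …, ℓ`, and zero blocks elsewhere. -/
def blockA (m ℓ : ℕ) (x : Fin m → ℝ) :
    Matrix (Fin (ℓ + 1) × Fin m) (Fin (ℓ + 1) × Fin m) ℝ :=
  Matrix.of fun p q =>
    if p.1 = q.1 ∧ p.2 = q.2 then x p.2
    else if (p.1 : ℕ) = (q.1 : ℕ) + 1 ∧ p.2 = q.2 then ((p.1 : ℕ) : ℝ)
    else 0

/-- The stacked matrix `[V; V_(1); V_(2); …; V_(ℓ)]`, whose block row `i` is the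
`i`-th derivative Vandermonde matrix. -/
def stackedVand (m n ℓ : ℕ) (x : Fin m → ℝ) :
    Matrix (Fin (ℓ + 1) × Fin m) (Fin (n + 1)) ℝ :=
  Matrix.of fun p k => vandDeriv m n (p.1 : ℕ) x p.2 k

/-- The vector `(e; 0; …; 0)` with `e` the all-ones vector of length `m`. -/
def eZeroVec (m ℓ : ℕ) : Fin (ℓ + 1) × Fin m → ℝ := fun p => if p.1 = 0 then 1 else 0

/-!
Column `k` of the stacked matrix lists the derivatives `p⁽ⁱ⁾(x j)` of `p = X ^ k`. On such a
vector of derivative values `A` acts as multiplication of `p` by `X`, because of the Leibniz rule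
`(X p)⁽ⁱ⁾ = X p⁽ⁱ⁾ + i p⁽ⁱ⁻¹⁾`; and `(e; 0; …; 0)` is the vector for `p = 1`.
-/

open Polynomial

theorem Polynomial.iterate_derivative_X_mul {R : Type*} [CommSemiring R] (p : R[X]) (i : ℕ) :
    derivative^[i] (X * p) = X * derivative^[i] p + (i : R[X]) * derivative^[i - 1] p := by
  induction i with
  | zero => simp
  | succ i ih =>
    rcases i with _ | i
    · simp [derivative_mul, add_comm]
    · rw [Function.iterate_succ_apply', ih, Function.iterate_succ_apply' _ (i + 1)]
      simp only [derivative_add, derivative_mul, derivative_X, derivative_natCast,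
        Nat.add_sub_cancel, Function.iterate_succ_apply']
      push_cast
      ring

section

variable (m ℓ : ℕ) (x : Fin m → ℝ)

-- At `i = 0` the truncated index `i - 1` is harmless, its coefficient being `0`.
theorem blockA_mulVec_apply (f : ℕ → Fin m → ℝ) (i : Fin (ℓ + 1)) (j : Fin m) :
    (blockA m ℓ x *ᵥ fun q => f q.1 q.2) (i, j) = x j * f i j + (i : ℕ) * f (i - 1) j := by
  have hrow : ∀ q : Fin (ℓ + 1) × Fin m, blockA m ℓ x (i, j) q * f q.1 q.2 =
      if q.2 = j then (if i = q.1 then x j * f i j else 0) +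
        (if (i : ℕ) = q.1 + 1 then (i : ℕ) * f (i - 1) j else 0) else 0 := by
    rintro ⟨i', j'⟩
    by_cases hj : j' = j
    · subst hj
      by_cases hi : i = i'
      · subst hi; simp [blockA]
      · by_cases hsucc : (i : ℕ) = i' + 1 <;> simp [blockA, hi, hsucc]
    · simp [blockA, Ne.symm hj, hj]
  simp only [mulVec, dotProduct, hrow, Fintype.sum_prod_type, Finset.sum_ite_eq',
    Finset.mem_univ, if_true, Finset.sum_add_distrib, Finset.sum_ite_eq]
  congr 1
  by_cases hi0 : (i : ℕ) = 0
  · simp [hi0]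
  · have hprev : ∀ q : Fin (ℓ + 1), (i : ℕ) = q + 1 ↔ q = ⟨i - 1, by omega⟩ := by
      intro q; simp only [Fin.ext_iff]; omega
    simp [hprev]

noncomputable def stackedDerivEval (p : ℝ[X]) : Fin (ℓ + 1) × Fin m → ℝ :=
  fun q => (derivative^[q.1] p).eval (x q.2)

theorem blockA_mulVec_stackedDerivEval (p : ℝ[X]) :
    blockA m ℓ x *ᵥ stackedDerivEval m ℓ x p = stackedDerivEval m ℓ x (X * p) := by
  ext ⟨i, j⟩
  refine (blockA_mulVec_apply m ℓ x (fun i j => (derivative^[i] p).eval (x j)) i j).trans ?_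
  simp [stackedDerivEval, iterate_derivative_X_mul]

theorem pow_mulVec_stackedDerivEval (p : ℝ[X]) (k : ℕ) :
    blockA m ℓ x ^ k *ᵥ stackedDerivEval m ℓ x p = stackedDerivEval m ℓ x (X ^ k * p) := by
  induction k with
  | zero => simp
  | succ k ih =>
    rw [pow_succ', ← mulVec_mulVec, ih, blockA_mulVec_stackedDerivEval, pow_succ', mul_assoc]

theorem stackedDerivEval_one : stackedDerivEval m ℓ x 1 = eZeroVec m ℓ := by
  ext ⟨i, j⟩
  rcases eq_or_ne i 0 with rfl | hi
  · simp [stackedDerivEval, eZeroVec]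
  · have hpos : 0 < (i : ℕ) := Nat.pos_of_ne_zero (Fin.val_ne_zero_iff.mpr hi)
    simp [stackedDerivEval, eZeroVec, hi, iterate_derivative_one hpos]

theorem stackedDerivEval_X_pow (n : ℕ) (k : Fin (n + 1)) :
    stackedDerivEval m ℓ x (X ^ (k : ℕ)) = fun q => stackedVand m n ℓ x q k := by
  ext ⟨i, j⟩
  simp only [stackedDerivEval, stackedVand, vandDeriv, of_apply,
    iterate_derivative_X_pow_eq_C_mul, eval_mul, eval_C, eval_pow, eval_X]
  split_ifs with h
  · rfl
  · simp [Nat.descFactorial_eq_zero_iff_lt.mpr (not_le.mp h)]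

end

/-- The `(k+1)`-th column of the stacked matrix `[V; V_(1); …; V_(ℓ)]` equals
`A ^ k` applied to the vector `(e; 0; …; 0)`. -/
theorem stacked_vandermonde_col_eq_pow_mulVec (m n ℓ : ℕ) (x : Fin m → ℝ)
    (k : Fin (n + 1)) :
    (fun p => stackedVand m n ℓ x p k) =
      (blockA m ℓ x ^ (k : ℕ)) *ᵥ eZeroVec m ℓ := by
  rw [← stackedDerivEval_one, pow_mulVec_stackedDerivEval, mul_one, stackedDerivEval_X_pow]
end

section
/- Let x_1,…,x_m be real numbers, X = diag(x_1,…,x_m), e ∈ ℝ^m the all-ones vector, and for ℓ ≥ 0 let V_{(ℓ)} ∈ ℝ^{m×(n+1)} be the ℓ-th derivative Vandermonde matrix (entry (j,k) equal to the ℓ-th derivative of x^k at x_j). Let A ∈ ℝ^{(ℓ+1)m×(ℓ+1)m} be the block lower-bidiagonal matrix with X in each diagonal block and i·I in subdiagonal block position (i+1,i) for i = 1,…,ℓ. Then the column space of the stacked matrix [V; V_{(1)}; …; V_{(ℓ)}] ∈ ℝ^{(ℓ+1)m×(n+1)} equals the Krylov subspace span{v, A·v, A²·v, …, Aⁿ·v},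 where v = (e; 0; …; 0) ∈ ℝ^{(ℓ+1)m}. -/
open Matrix

lemma blockA_mulVec (m ℓ : ℕ) (x : Fin m → ℝ) (w : Fin (ℓ + 1) × Fin m → ℝ)
    (p : Fin (ℓ + 1) × Fin m) :
    (blockA m ℓ x *ᵥ w) p =
      x p.2 * w p + ((p.1 : ℕ) : ℝ) * w (⟨(p.1 : ℕ) - 1, by omega⟩, p.2) := by
  classical
  simp only [mulVec, dotProduct, blockA, Matrix.of_apply]
  rw [Fintype.sum_prod_type]
  have h1 : ∀ q1 : Fin (ℓ + 1), ∑ q2 : Fin m,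
      (if p.1 = q1 ∧ p.2 = q2 then x p.2
        else if (p.1 : ℕ) = (q1 : ℕ) + 1 ∧ p.2 = q2 then ((p.1 : ℕ) : ℝ) else 0) * w (q1, q2)
      = (if p.1 = q1 then x p.2
          else if (p.1 : ℕ) = (q1 : ℕ) + 1 then ((p.1 : ℕ) : ℝ) else 0) * w (q1, p.2) := by
    intro q1
    rw [Finset.sum_eq_single p.2]
    · split_ifs <;> simp_all
    · intro b _ hb
      split_ifs <;> simp_all
    · simp
  simp only [h1]
  rcases p with ⟨i, j⟩
  simp only
  rcases Nat.eq_zero_or_pos (i : ℕ) with h0 | h0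
  · rw [Finset.sum_eq_single i]
    · simp [h0]
    · intro b _ hb
      have : ¬ ((i:ℕ) = (b:ℕ) + 1) := by omega
      simp [hb.symm, this]
    · simp
  · set i' : Fin (ℓ+1) := ⟨(i:ℕ) - 1, by omega⟩ with hi'
    have hne : i ≠ i' := by
      intro h; apply_fun Fin.val at h
      rw [hi'] at h; simp at h; omega
    have h3 : (i:ℕ) = (i':ℕ) + 1 := by rw [hi']; simp; omega
    rw [Finset.sum_eq_add_of_mem i i' (Finset.mem_univ _) (Finset.mem_univ _) hne ?_]
    · rw [if_pos rfl, if_neg hne, if_pos h3]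
    · intro c _ hc
      have hic : i ≠ c := fun h => hc.1 h.symm
      have hic2 : ¬ ((i:ℕ) = (c:ℕ) + 1) := by
        intro h
        apply hc.2
        apply Fin.ext
        rw [hi']; omega
      rw [if_neg hic, if_neg hic2, zero_mul]

lemma descFactorial_id (k i : ℕ) :
    ((k + 1).descFactorial (i + 1)) = k.descFactorial (i + 1) + (i + 1) * k.descFactorial i := by
  rcases le_or_gt i k with h | h
  · rw [Nat.succ_descFactorial_succ, Nat.descFactorial_succ, ← add_mul]
    congr 1
    omega
  · rw [Nat.succ_descFactorial_succ,
      Nat.descFactorial_eq_zero_iff_lt.2 h,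
      Nat.descFactorial_eq_zero_iff_lt.2 (by omega)]
    simp

lemma krylov_eq (m ℓ : ℕ) (x : Fin m → ℝ) (k : ℕ) :
    (blockA m ℓ x ^ k) *ᵥ eZeroVec m ℓ =
      fun p : Fin (ℓ + 1) × Fin m =>
        if (p.1 : ℕ) ≤ k then (k.descFactorial (p.1 : ℕ) : ℝ) * x p.2 ^ (k - (p.1 : ℕ))
        else 0 := by
  induction k with
  | zero =>
    funext p
    simp only [pow_zero, one_mulVec, eZeroVec, Nat.le_zero, Fin.ext_iff, Fin.val_zero]
    split_ifs <;> simp_all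
  | succ k ih =>
    funext p
    rw [pow_succ', ← Matrix.mulVec_mulVec, ih, blockA_mulVec]
    rcases p with ⟨i, j⟩
    simp only
    rcases Nat.eq_zero_or_pos (i : ℕ) with h0 | h0
    · simp [h0]
      ring
    · obtain ⟨i', hii⟩ : ∃ i'', (i : ℕ) = i'' + 1 := ⟨(i : ℕ) - 1, by omega⟩
      rw [hii]
      simp only [Nat.add_sub_cancel]
      rcases lt_trichotomy (i' + 1) (k + 1) with h | h | h
      · rw [if_pos (by omega), if_pos (by omega), if_pos (by omega),
          descFactorial_id]
        have e1 : k + 1 - (i' + 1) = k - (i' + 1) + 1 := by omega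
        have e2 : k - i' = k - (i' + 1) + 1 := by omega
        rw [e1, e2]
        push_cast
        ring
      · have hz : k.descFactorial (i' + 1) = 0 :=
          Nat.descFactorial_eq_zero_iff_lt.2 (by omega)
        rw [if_neg (by omega), if_pos (by omega), if_pos (by omega), descFactorial_id, hz]
        have e2 : k - i' = k + 1 - (i' + 1) := by omega
        rw [e2]
        push_cast
        ring
      · rw [if_neg (by omega), if_neg (by omega), if_neg (by omega)]
        ring

/-- The column space of the stacked matrix `[V; V_(1); …; V_(ℓ)]` equals the
Krylov subspace `span {v, A v, A² v, …, Aⁿ v}` with `v = (e; 0; …; 0)`. -/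
theorem stacked_vandermonde_colSpace_eq_krylov (m n ℓ : ℕ) (x : Fin m → ℝ) :
    Submodule.span ℝ
        (Set.range fun k : Fin (n + 1) => fun p => stackedVand m n ℓ x p k) =
      Submodule.span ℝ
        (Set.range fun k : Fin (n + 1) =>
          (blockA m ℓ x ^ (k : ℕ)) *ᵥ eZeroVec m ℓ) := by
  congr 1
  apply congrArg
  funext k
  rw [krylov_eq]
  funext p
  simp [stackedVand, vandDeriv]
end

section
/- Let n ≥ 1, let H = (h_{j,k}) ∈ ℝ^{(n+1)×n} be an upper Hessenberg matrix (h_{j,k} = 0 for j > k+1, indices j = 0,…,n, k = 0,…,n−1) with h_{k+1,k} ≠ 0 for all k, and define polynomials p_0 = 1 and h_{k+1,k}·p_{k+1}(X) = X·p_k(X) − Σ_{j=0}^{k} h_{j,k}·p_j(X). Let s_1,…,s_M be real numbers, S = diag(s_1,…,s_M), and let W ∈ ℝ^{M×(n+1)} be the matrix with entries W_{j,k} = p_k(s_j). Then the first column of W is the all-ones vector and S·W_− = W·H, where W_− ∈ ℝ^{M×n} is W with its last column deleted. Moreover, W is the unique matrix with all-ones first column satisfying S·W_− = W·H. -/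
/-!
Column `k` of `S W₋ = W H` says `s_j W_{j,k} = ∑_{i ≤ k+1} W_{j,i} h_{i,k}` for every `j`; for
`W_{j,i} = p_i(s_j)` this is the Arnoldi recursion evaluated at `s_j`. As `h_{k+1,k} ≠ 0`, the
same equation determines column `k + 1` of any solution from the earlier ones, so the difference of
two solutions with the same first column vanishes column by column.
-/

open Matrix Polynomial

namespace Matrix

def IsUpperHessenberg {α : Type*} [Zero α] {n : ℕ} (H : Matrix (Fin (n + 1)) (Fin n) α) :
    Prop :=
  ∀ (i : Fin (n + 1)) (k : Fin n), (k : ℕ) + 1 < i → H i k = 0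

variable {ι K : Type*} [Ring K] {n : ℕ}

theorem mul_hessenberg_apply_of_eq_zero {V : Matrix ι (Fin (n + 1)) K}
    {H : Matrix (Fin (n + 1)) (Fin n) K} (hHess : H.IsUpperHessenberg)
    {j : ι} {k : Fin n} (hV : ∀ i ≤ k.castSucc, V j i = 0) :
    (V * H) j k = V j k.succ * H k.succ k := by
  rw [mul_apply, Finset.sum_eq_single k.succ]
  · intro i _ hik
    rcases le_or_gt i k.castSucc with hle | hgt
    · rw [hV i hle, zero_mul]
    · rw [hHess i k (Fin.lt_def.mp ((Fin.castSucc_lt_iff_succ_le.mp hgt).lt_of_ne' hik)),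
        mul_zero]
  · simp

theorem eq_zero_of_mul_submatrix_castSucc_eq_mul_hessenberg
    [NoZeroDivisors K] [Fintype ι] [DecidableEq ι]
    {A : Matrix ι ι K} {D : Matrix ι (Fin (n + 1)) K} {H : Matrix (Fin (n + 1)) (Fin n) K}
    (hHess : H.IsUpperHessenberg) (hsub : ∀ k, H k.succ k ≠ 0)
    (hD0 : ∀ j, D j 0 = 0) (hD : A * D.submatrix id Fin.castSucc = D * H) : D = 0 := by
  suffices hcols : ∀ m : Fin (n + 1), ∀ i ≤ m, ∀ j, D j i = 0 by
    ext j i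
    exact hcols i i le_rfl j
  refine Fin.induction ?_ (fun k ih => ?_)
  · intro i hi j
    rw [nonpos_iff_eq_zero.mp hi, hD0]
  · intro i hi j
    rcases le_or_gt i k.castSucc with hle | hgt
    · exact ih i hle j
    obtain rfl : i = k.succ := le_antisymm hi (Fin.castSucc_lt_iff_succ_le.mp hgt)
    have hcol := congrFun (congrFun hD j) k
    rw [mul_hessenberg_apply_of_eq_zero hHess (fun i hi => ih i hi j), mul_apply,
      Finset.sum_eq_zero (fun l _ => by rw [submatrix_apply, id, ih _ le_rfl l, mul_zero])] at hcol
    exact (mul_eq_zero.mp hcol.symm).resolve_right (hsub k)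

theorem eq_of_mul_submatrix_castSucc_eq_mul_hessenberg
    [NoZeroDivisors K] [Fintype ι] [DecidableEq ι]
    {A : Matrix ι ι K} {V V' : Matrix ι (Fin (n + 1)) K} {H : Matrix (Fin (n + 1)) (Fin n) K}
    (hHess : H.IsUpperHessenberg) (hsub : ∀ k, H k.succ k ≠ 0)
    (h0 : ∀ j, V j 0 = V' j 0) (hV : A * V.submatrix id Fin.castSucc = V * H)
    (hV' : A * V'.submatrix id Fin.castSucc = V' * H) : V = V' := by
  refine sub_eq_zero.mp (eq_zero_of_mul_submatrix_castSucc_eq_mul_hessenberg (A := A) hHess hsub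
    (fun j => by rw [sub_apply, h0, sub_self]) ?_)
  rw [Matrix.sub_mul, ← hV, ← hV', ← Matrix.mul_sub]
  rfl

end Matrix

theorem Polynomial.X_mul_eq_sum_of_arnoldi {R : Type*} [CommRing R] {n k : ℕ} (hk : k < n)
    {h : ℕ → ℕ → R} {p : ℕ → R[X]} (hHess : ∀ j, j > k + 1 → h j k = 0)
    (hrec : h (k + 1) k • p (k + 1) = X * p k - ∑ j ∈ Finset.range (k + 1), h j k • p j) :
    X * p k = ∑ j ∈ Finset.range (n + 1), h j k • p j := by
  rw [← Finset.sum_subset (Finset.range_subset_range.mpr (by omega : k + 2 ≤ n + 1))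
    (fun j _ hj => by rw [hHess j (by simp at hj; omega), zero_smul]), Finset.sum_range_succ, hrec]
  abel

theorem arnoldi_eval_matrix_general (n : ℕ) (h : ℕ → ℕ → ℝ)
    (hHess : ∀ j k, k < n → j > k + 1 → h j k = 0)
    (hsub : ∀ k < n, h (k + 1) k ≠ 0)
    (p : ℕ → Polynomial ℝ) (hp0 : p 0 = 1)
    (hrec : ∀ k < n,
      h (k + 1) k • p (k + 1) =
        Polynomial.X * p k - ∑ j ∈ Finset.range (k + 1), h j k • p j)
    (M : ℕ) (s : Fin M → ℝ)
    (H : Matrix (Fin (n + 1)) (Fin n) ℝ)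
    (hH : ∀ j k, H j k = h (j : ℕ) (k : ℕ))
    (W : Matrix (Fin M) (Fin (n + 1)) ℝ)
    (hW : ∀ j k, W j k = (p (k : ℕ)).eval (s j)) :
    (∀ j, W j 0 = 1) ∧
    Matrix.diagonal s * W.submatrix id Fin.castSucc = W * H ∧
    ∀ W' : Matrix (Fin M) (Fin (n + 1)) ℝ,
      (∀ j, W' j 0 = 1) →
      Matrix.diagonal s * W'.submatrix id Fin.castSucc = W' * H →
      W' = W := by
  have hW0 : ∀ j, W j 0 = 1 := fun j => by simp [hW, hp0]
  have hHessenberg : H.IsUpperHessenberg :=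
    fun i k hik => by rw [hH, hHess i k k.isLt hik]
  have hrel : diagonal s * W.submatrix id Fin.castSucc = W * H := by
    ext j k
    have hcol := congrArg (eval (s j))
      (X_mul_eq_sum_of_arnoldi k.isLt (hHess · k k.isLt) (hrec k k.isLt))
    simp only [eval_mul, eval_X, eval_finsetSum, eval_smul, smul_eq_mul] at hcol
    rw [diagonal_mul, submatrix_apply, id, mul_apply, hW, Fin.val_castSucc, hcol,
      ← Fin.sum_univ_eq_sum_range (fun i => h i k * (p i).eval (s j))]
    simp only [hW, hH, mul_comm]
  have hsubH : ∀ k : Fin n, H k.succ k ≠ 0 := fun k => by simpa [hH] using hsub k k.isLt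
  exact ⟨hW0, hrel, fun W' hW'0 hrel' => eq_of_mul_submatrix_castSucc_eq_mul_hessenberg
    hHessenberg hsubH (fun j => by rw [hW'0, hW0]) hrel' hrel⟩

/-- Let `H ∈ ℝ^{(n+1) × n}` be upper Hessenberg with nonzero subdiagonal
entries, `p_0 = 1, …, p_n` the associated Arnoldi polynomials, `S = diag s`,
and `W` the matrix with entries `W j k = p_k (s j)`. Then the first column of
`W` is the all-ones vector, `S * W₋ = W * H` (where `W₋` is `W` with its last
column deleted), and `W` is the unique matrix with all-ones first column
satisfying this relation. -/
theorem arnoldi_eval_matrix (n : ℕ) (hn : 1 ≤ n) (h : ℕ → ℕ → ℝ)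
    (hHess : ∀ j k, k < n → j > k + 1 → h j k = 0)
    (hsub : ∀ k < n, h (k + 1) k ≠ 0)
    (p : ℕ → Polynomial ℝ) (hp0 : p 0 = 1)
    (hrec : ∀ k < n,
      h (k + 1) k • p (k + 1) =
        Polynomial.X * p k - ∑ j ∈ Finset.range (k + 1), h j k • p j)
    (M : ℕ) (s : Fin M → ℝ)
    (H : Matrix (Fin (n + 1)) (Fin n) ℝ)
    (hH : ∀ j k, H j k = h (j : ℕ) (k : ℕ))
    (W : Matrix (Fin M) (Fin (n + 1)) ℝ)
    (hW : ∀ j k, W j k = (p (k : ℕ)).eval (s j)) :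
    (∀ j, W j 0 = 1) ∧
    Matrix.diagonal s * W.submatrix id Fin.castSucc = W * H ∧
    ∀ W' : Matrix (Fin M) (Fin (n + 1)) ℝ,
      (∀ j, W' j 0 = 1) →
      Matrix.diagonal s * W'.submatrix id Fin.castSucc = W' * H →
      W' = W :=
  arnoldi_eval_matrix_general n h hHess hsub p hp0 hrec M s H hH W hW
end

section
/- Let n ≥ 1, let H = (h_{j,k}) ∈ ℝ^{(n+1)×n} be an upper Hessenberg matrix with h_{k+1,k} ≠ 0 for all k, and let p_0 = 1, h_{k+1,k}·p_{k+1}(X) = X·p_k(X) − Σ_{j=0}^{k} h_{j,k}·p_j(X) be the associated Arnoldi polynomials. Let s_1,…,s_M be real numbers, S = diag(s_1,…,s_M), and let W ∈ ℝ^{2M×(n+1)} be the block matrix whose upper block has entries p_k(s_j) and whose lower block has entries p'_k(s_j) (formal derivatives evaluated at s_j). Then the first column of W is (e; 0) with e the all-ones vector in ℝ^M, and [[S, O],[I, S]]·W_− = W·H, where W_− is W with its last column deleted, I is the M×M identity, and O the M×M zero matrix. Moreover, W is the unique matrix with first column (e; 0) satisfying this relation. -/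
/-!
Multiplication by `X` acts on the Hermite data `(q(s_j); q'(s_j))` of a polynomial as the block
operator `[[S, O], [I, S]]` (product rule), while the Arnoldi recurrence says exactly that
`X p_k = Σ_i h_{i,k} p_i`, i.e. that multiplication by `X` acts on `(p_0, …, p_n)` as `H`.
Uniqueness is column-by-column: since `H` is Hessenberg, column `k` of the relation determines
column `k + 1` of `W` once the subdiagonal entry `h_{k+1,k}` is cancelled.
-/

open Matrix Polynomial

section HermiteEval

variable {R ι κ m : Type*} [CommSemiring R]

noncomputable def hermiteEval (p : ι → R[X]) (s : m → R) : Matrix (m ⊕ m) ι R :=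
  fromRows (of fun j k => (p k).eval (s j)) (of fun j k => (derivative (p k)).eval (s j))

theorem hermiteEval_submatrix (p : ι → R[X]) (s : m → R) (e : κ → ι) :
    (hermiteEval p s).submatrix id e = hermiteEval (fun k => p (e k)) s := by
  ext (j | j) k <;> rfl

theorem hermiteEval_X_mul [Fintype m] [DecidableEq m] (q : κ → R[X]) (s : m → R) :
    hermiteEval (fun k => X * q k) s =
      fromBlocks (diagonal s) 0 1 (diagonal s) * hermiteEval q s := by
  rw [hermiteEval, hermiteEval, fromBlocks_mul_fromRows]
  congr 1 <;> ext j k <;> simp [diagonal_mul, derivative_mul]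

theorem hermiteEval_sum_smul [Fintype ι] (p : ι → R[X]) (H : Matrix ι κ R) (s : m → R) :
    hermiteEval (fun k => ∑ i, H i k • p i) s = hermiteEval p s * H := by
  rw [hermiteEval, hermiteEval, fromRows_mul]
  congr 1 <;> ext j k <;> simp [mul_apply, eval_finsetSum, mul_comm]

end HermiteEval

theorem X_mul_eq_sum_range_of_recurrence {R : Type*} [CommRing R] {h : ℕ → ℕ → R}
    {p : ℕ → R[X]} {k N : ℕ} (hkN : k + 2 ≤ N) (hzero : ∀ j, k + 1 < j → h j k = 0)
    (hrec : h (k + 1) k • p (k + 1) = X * p k - ∑ j ∈ Finset.range (k + 1), h j k • p j) :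
    X * p k = ∑ j ∈ Finset.range N, h j k • p j := by
  have htail : ∑ j ∈ Finset.range N, h j k • p j = ∑ j ∈ Finset.range (k + 2), h j k • p j := by
    refine (Finset.sum_subset (Finset.range_subset_range.2 hkN) fun j _ hj => ?_).symm
    rw [hzero j (by simp at hj; omega), zero_smul]
  rw [htail, Finset.sum_range_succ, hrec, add_sub_cancel]

section Hessenberg

variable {R m : Type*} [Ring R] [NoZeroDivisors R] [Fintype m] {n : ℕ}
  {A : Matrix m m R} {H : Matrix (Fin (n + 1)) (Fin n) R}

theorem eq_zero_of_mul_submatrix_castSucc_eq_mul_hessenberg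
    (hHess : ∀ (i : Fin (n + 1)) (k : Fin n), (k : ℕ) + 1 < i → H i k = 0)
    (hsub : ∀ k : Fin n, H k.succ k ≠ 0) {D : Matrix m (Fin (n + 1)) R}
    (hD : A * D.submatrix id Fin.castSucc = D * H) (hD0 : ∀ r, D r 0 = 0) : D = 0 := by
  suffices hcols : ∀ k : Fin (n + 1), ∀ i ≤ k, ∀ r, D r i = 0 by
    ext r i
    exact hcols i i le_rfl r
  intro k
  induction k using Fin.induction with
  | zero =>
    intro i hi r
    rw [Fin.le_zero_iff.1 hi, hD0]
  | succ k ih =>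
    have hnext : ∀ r, D r k.succ = 0 := by
      intro r
      have hrow := congrFun (congrFun hD r) k
      have hlhs : (A * D.submatrix id Fin.castSucc) r k = 0 := by
        simp [mul_apply, ih k.castSucc le_rfl]
      have hrhs : (D * H) r k = D r k.succ * H k.succ k := by
        refine Finset.sum_eq_single k.succ (fun i _ hik => ?_)
          (fun hk => (hk (Finset.mem_univ _)).elim)
        rcases lt_or_gt_of_ne hik with hlt | hgt
        · exact mul_eq_zero_of_left (ih i (Fin.le_castSucc_iff.2 hlt) r) _
        · exact mul_eq_zero_of_right _ (hHess i k (by simpa using Fin.lt_def.1 hgt))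
      rw [hlhs, hrhs] at hrow
      exact (mul_eq_zero.1 hrow.symm).resolve_right (hsub k)
    intro i hi r
    rcases hi.eq_or_lt with rfl | hlt
    · exact hnext r
    · exact ih i (Fin.le_castSucc_iff.2 hlt) r

theorem eq_of_mul_submatrix_castSucc_eq_mul_hessenberg
    (hHess : ∀ (i : Fin (n + 1)) (k : Fin n), (k : ℕ) + 1 < i → H i k = 0)
    (hsub : ∀ k : Fin n, H k.succ k ≠ 0) {V V' : Matrix m (Fin (n + 1)) R}
    (hV : A * V.submatrix id Fin.castSucc = V * H)
    (hV' : A * V'.submatrix id Fin.castSucc = V' * H) (h0 : ∀ r, V' r 0 = V r 0) :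
    V' = V := by
  refine sub_eq_zero.1 (eq_zero_of_mul_submatrix_castSucc_eq_mul_hessenberg (A := A) hHess hsub ?_
    fun r => sub_eq_zero.2 (h0 r))
  change A * (V'.submatrix id Fin.castSucc - V.submatrix id Fin.castSucc) = _
  rw [Matrix.mul_sub, Matrix.sub_mul, hV, hV']

end Hessenberg

theorem arnoldi_hermite_eval_matrix_general (n : ℕ) (h : ℕ → ℕ → ℝ)
    (hHess : ∀ j k, k < n → j > k + 1 → h j k = 0)
    (hsub : ∀ k < n, h (k + 1) k ≠ 0)
    (p : ℕ → Polynomial ℝ) (hp0 : p 0 = 1)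
    (hrec : ∀ k < n,
      h (k + 1) k • p (k + 1) =
        Polynomial.X * p k - ∑ j ∈ Finset.range (k + 1), h j k • p j)
    (M : ℕ) (s : Fin M → ℝ)
    (H : Matrix (Fin (n + 1)) (Fin n) ℝ)
    (hH : ∀ j k, H j k = h (j : ℕ) (k : ℕ))
    (W : Matrix (Fin M ⊕ Fin M) (Fin (n + 1)) ℝ)
    (hWtop : ∀ j k, W (Sum.inl j) k = (p (k : ℕ)).eval (s j))
    (hWbot : ∀ j k, W (Sum.inr j) k =
      (Polynomial.derivative (p (k : ℕ))).eval (s j)) :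
    ((∀ j, W (Sum.inl j) 0 = 1) ∧ (∀ j, W (Sum.inr j) 0 = 0)) ∧
    Matrix.fromBlocks (Matrix.diagonal s) 0 1 (Matrix.diagonal s) *
        W.submatrix id Fin.castSucc = W * H ∧
    ∀ W' : Matrix (Fin M ⊕ Fin M) (Fin (n + 1)) ℝ,
      (∀ j, W' (Sum.inl j) 0 = 1) → (∀ j, W' (Sum.inr j) 0 = 0) →
      Matrix.fromBlocks (Matrix.diagonal s) 0 1 (Matrix.diagonal s) *
          W'.submatrix id Fin.castSucc = W' * H →
      W' = W := by
  have hW : W = hermiteEval (fun k : Fin (n + 1) => p k) s := by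
    ext (j | j) k <;> simp [hermiteEval, hWtop, hWbot]
  have hX : (fun k : Fin n => X * p (k.castSucc : ℕ)) = fun k => ∑ i, H i k • p i := by
    ext1 k
    simp only [Fin.val_castSucc, hH, Fin.sum_univ_eq_sum_range fun i => h i k • p i]
    exact X_mul_eq_sum_range_of_recurrence (by omega)
      (fun j hj => hHess j k k.2 hj) (hrec k k.2)
  have hrel : fromBlocks (diagonal s) 0 1 (diagonal s) * W.submatrix id Fin.castSucc = W * H := by
    rw [hW, hermiteEval_submatrix, ← hermiteEval_X_mul, hX, hermiteEval_sum_smul]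
  have hcol0 : (∀ j, W (Sum.inl j) 0 = 1) ∧ (∀ j, W (Sum.inr j) 0 = 0) :=
    ⟨fun j => by simp [hWtop, hp0], fun j => by simp [hWbot, hp0]⟩
  refine ⟨hcol0, hrel, fun W' htop' hbot' hrel' => ?_⟩
  refine eq_of_mul_submatrix_castSucc_eq_mul_hessenberg
    (fun i k hik => by rw [hH]; exact hHess i k k.2 hik)
    (fun k => by rw [hH]; exact hsub k k.2) hrel hrel' ?_
  rintro (j | j)
  · rw [htop' j, hcol0.1 j]
  · rw [hbot' j, hcol0.2 j]

/-- Let `H ∈ ℝ^{(n+1) × n}` be upper Hessenberg with nonzero subdiagonal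
entries, `p_0 = 1, …, p_n` the associated Arnoldi polynomials, `S = diag s`,
and `W ∈ ℝ^{2M × (n+1)}` the block matrix whose upper block has entries
`p_k (s j)` and whose lower block has entries `p'_k (s j)`. Then the first
column of `W` is `(e; 0)` with `e` the all-ones vector,
`[[S, O], [I, S]] * W₋ = W * H` (`W₋` is `W` with its last column deleted), and
`W` is the unique matrix with first column `(e; 0)` satisfying this relation. -/
theorem arnoldi_hermite_eval_matrix (n : ℕ) (hn : 1 ≤ n) (h : ℕ → ℕ → ℝ)
    (hHess : ∀ j k, k < n → j > k + 1 → h j k = 0)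
    (hsub : ∀ k < n, h (k + 1) k ≠ 0)
    (p : ℕ → Polynomial ℝ) (hp0 : p 0 = 1)
    (hrec : ∀ k < n,
      h (k + 1) k • p (k + 1) =
        Polynomial.X * p k - ∑ j ∈ Finset.range (k + 1), h j k • p j)
    (M : ℕ) (s : Fin M → ℝ)
    (H : Matrix (Fin (n + 1)) (Fin n) ℝ)
    (hH : ∀ j k, H j k = h (j : ℕ) (k : ℕ))
    (W : Matrix (Fin M ⊕ Fin M) (Fin (n + 1)) ℝ)
    (hWtop : ∀ j k, W (Sum.inl j) k = (p (k : ℕ)).eval (s j))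
    (hWbot : ∀ j k, W (Sum.inr j) k =
      (Polynomial.derivative (p (k : ℕ))).eval (s j)) :
    ((∀ j, W (Sum.inl j) 0 = 1) ∧ (∀ j, W (Sum.inr j) 0 = 0)) ∧
    Matrix.fromBlocks (Matrix.diagonal s) 0 1 (Matrix.diagonal s) *
        W.submatrix id Fin.castSucc = W * H ∧
    ∀ W' : Matrix (Fin M ⊕ Fin M) (Fin (n + 1)) ℝ,
      (∀ j, W' (Sum.inl j) 0 = 1) → (∀ j, W' (Sum.inr j) 0 = 0) →
      Matrix.fromBlocks (Matrix.diagonal s) 0 1 (Matrix.diagonal s) *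
          W'.submatrix id Fin.castSucc = W' * H →
      W' = W :=
  arnoldi_hermite_eval_matrix_general n h hHess hsub p hp0 hrec M s H hH W hWtop hWbot
end
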